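/- arXiv:math/0306200 — 4 statements merged into one kernel-verified Lean document; each statement's English description precedes it below -/
import Mathlib

section
/- Let (ω_ν)_{ν∈ℕ} be an injective sequence of real numbers (a sequence of pairwise different real numbers) and let α < β be real numbers. Then there exists a real number η with α < η < β such that η is not a member of the sequence, i.e., η ≠ ω_ν for every ν. -/
/-- Cantor's first uncountability theorem: any open interval (α, β) contains a
real number η that is not a member of a given injective sequence of reals. -/
theorem cantor_first_proof (ω : ℕ → ℝ) (hω : Function.Injective ω)
    (α β : ℝ) (hαβ : α < β) :
    ∃ η : ℝ, α < η ∧ η < β ∧ ∀ ν : ℕ, η ≠ ω ν := by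
  have h1 : ¬ (Set.Ioo α β ⊆ Set.range ω) := by
    intro hsub
    exact (fun hc => (Cardinal.mk_Ioo_real hαβ ▸ hc.le_aleph0).not_gt Cardinal.aleph0_lt_continuum) ((Set.countable_range ω).mono hsub)
  obtain ⟨η, hη, hnr⟩ := Set.not_subset.mp h1
  exact ⟨η, hη.1, hη.2, fun ν h => hnr ⟨ν, h.symm⟩⟩
end

section
/- Let d : ℕ → ℕ and e : ℕ → ℕ be digit sequences with 1 ≤ d_k ≤ 8 for all k and e_k ≤ 9 for all k. If d ≠ e (the sequences differ in at least one position), then the real numbers ∑_{k=0}^∞ d_k · 10^{-(k+1)} and ∑_{k=0}^∞ e_k · 10^{-(k+1)} are different. -/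
/-!
Multiplying a base-`b` expansion by `b` splits it into its leading digit and the value of the
shifted expansion, which lies in `[0, 1]`, and even in `(0, 1)` when all digits lie in
`{1, …, b - 2}`. So two equal values force equal leading digits, since the two fractional parts
differ by less than `1`, and then equal shifted values; induction on the position does the rest.
-/

noncomputable def digitsValue (b : ℕ) (a : ℕ → ℕ) : ℝ :=
  ∑' k, (a k : ℝ) / (b : ℝ) ^ (k + 1)

lemma eq_of_natCast_add_eq {m n : ℕ} {x y : ℝ} (hx : x ∈ Set.Ioo 0 1) (hy : y ∈ Set.Icc 0 1)
    (h : (m : ℝ) + x = n + y) : m = n := by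
  have hmn : (m : ℝ) < n + 1 := by linarith [hx.1, hy.2]
  have hnm : (n : ℝ) < m + 1 := by linarith [hx.2, hy.1]
  norm_cast at hmn hnm
  omega

section geometric

variable {b : ℕ}

lemma const_div_pow_succ_eq (c : ℝ) :
    (fun k : ℕ => c / (b : ℝ) ^ (k + 1)) = fun k => c / b * (1 / b) ^ k := by
  ext k
  rw [pow_succ, one_div_pow, div_mul_div_comm, mul_one, mul_comm]

lemma summable_const_div_pow_succ (hb : 1 < b) (c : ℝ) :
    Summable fun k : ℕ => c / (b : ℝ) ^ (k + 1) := by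
  have hb' : (1 : ℝ) < b := by exact_mod_cast hb
  rw [const_div_pow_succ_eq]
  exact (summable_geometric_of_lt_one (by positivity) ((div_lt_one (by positivity)).2 hb')).mul_left _

lemma tsum_const_div_pow_succ (hb : 1 < b) (c : ℝ) :
    ∑' k : ℕ, c / (b : ℝ) ^ (k + 1) = c / (b - 1) := by
  have hb' : (1 : ℝ) < b := by exact_mod_cast hb
  rw [const_div_pow_succ_eq, tsum_mul_left,
    tsum_geometric_of_lt_one (by positivity) ((div_lt_one (by positivity)).2 hb')]
  have : (b : ℝ) - 1 ≠ 0 := by linarith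
  field_simp

end geometric

namespace digitsValue

variable {b : ℕ} {a d e : ℕ → ℕ}

lemma summable (hb : 1 < b) (ha : ∀ k, a k < b) :
    Summable fun k => (a k : ℝ) / (b : ℝ) ^ (k + 1) :=
  (summable_const_div_pow_succ hb b).of_nonneg_of_le (fun _ => by positivity)
    fun k => by gcongr; exact_mod_cast (ha k).le

lemma nonneg : 0 ≤ digitsValue b a :=
  tsum_nonneg fun _ => by positivity

lemma le_div (hb : 1 < b) (ha : ∀ k, a k < b) {c : ℝ} (hc : ∀ k, (a k : ℝ) ≤ c) :
    digitsValue b a ≤ c / (b - 1) := by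
  rw [← tsum_const_div_pow_succ hb]
  exact (summable hb ha).tsum_le_tsum (fun k => by gcongr; exact hc k)
    (summable_const_div_pow_succ hb c)

lemma div_le (hb : 1 < b) (ha : ∀ k, a k < b) {c : ℝ} (hc : ∀ k, c ≤ a k) :
    c / (b - 1) ≤ digitsValue b a := by
  rw [← tsum_const_div_pow_succ hb]
  exact (summable_const_div_pow_succ hb c).tsum_le_tsum (fun k => by gcongr; exact hc k)
    (summable hb ha)

lemma mem_Icc (hb : 1 < b) (ha : ∀ k, a k < b) : digitsValue b a ∈ Set.Icc 0 1 := by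
  refine ⟨nonneg, ?_⟩
  have hb' : (1 : ℝ) < b := by exact_mod_cast hb
  calc digitsValue b a ≤ (b - 1) / (b - 1) :=
        le_div hb ha fun k => le_sub_iff_add_le.2 (by exact_mod_cast ha k)
    _ = 1 := div_self (by linarith)

lemma mem_Ioo (ha : ∀ k, 1 ≤ a k ∧ a k + 2 ≤ b) : digitsValue b a ∈ Set.Ioo 0 1 := by
  have hb : 1 < b := by have := ha 0; omega
  have hb' : (2 : ℝ) ≤ b := by exact_mod_cast (show 2 ≤ b by have := ha 0; omega)
  have hlt : ∀ k, a k < b := fun k => by have := ha k; omega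
  constructor
  · calc (0 : ℝ) < 1 / (b - 1) := by apply div_pos <;> linarith
      _ ≤ digitsValue b a := div_le hb hlt fun k => by exact_mod_cast (ha k).1
  · calc digitsValue b a ≤ (b - 2) / (b - 1) :=
          le_div hb hlt fun k => le_sub_iff_add_le.2 (by exact_mod_cast (ha k).2)
      _ < 1 := by rw [div_lt_one (by linarith)]; linarith

lemma eq_head_add_tail (hb : 1 < b) (ha : ∀ k, a k < b) :
    digitsValue b a = (a 0 + digitsValue b fun k => a (k + 1)) / b := by
  rw [digitsValue, (summable hb ha).tsum_eq_zero_add, digitsValue, add_div, ← tsum_div_const]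
  congr 1
  · simp
  · congr 1; ext k; rw [pow_succ, div_div]

lemma head_eq_and_tail_eq_of_eq (hd : ∀ k, 1 ≤ d k ∧ d k + 2 ≤ b) (he : ∀ k, e k < b)
    (h : digitsValue b d = digitsValue b e) :
    d 0 = e 0 ∧ (digitsValue b fun k => d (k + 1)) = digitsValue b fun k => e (k + 1) := by
  have hb : 1 < b := by have := hd 0; omega
  rw [eq_head_add_tail hb fun k => by have := hd k; omega, eq_head_add_tail hb he,
    div_left_inj' (by positivity)] at h
  have hhead : d 0 = e 0 :=
    eq_of_natCast_add_eq (mem_Ioo fun k => hd (k + 1)) (mem_Icc hb fun k => he (k + 1)) h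
  rw [hhead, add_right_inj] at h
  exact ⟨hhead, h⟩

theorem eq_of_eq (hd : ∀ k, 1 ≤ d k ∧ d k + 2 ≤ b) (he : ∀ k, e k < b)
    (h : digitsValue b d = digitsValue b e) : d = e := by
  funext n
  induction n generalizing d e with
  | zero => exact (head_eq_and_tail_eq_of_eq hd he h).1
  | succ n ih =>
    exact ih (fun k => hd (k + 1)) (fun k => he (k + 1)) (head_eq_and_tail_eq_of_eq hd he h).2

end digitsValue

/-- Arithmetical core of the diagonal argument: decimal expansions whose digits
lie in {1,…,8} are unique, so two different digit sequences (one with digits in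
{1,…,8}, the other with digits ≤ 9) give different real numbers. -/
theorem decimal_digits_injective (d e : ℕ → ℕ)
    (hd : ∀ k, 1 ≤ d k ∧ d k ≤ 8) (he : ∀ k, e k ≤ 9) (hne : d ≠ e) :
    (∑' k : ℕ, (d k : ℝ) / 10 ^ (k + 1)) ≠ ∑' k : ℕ, (e k : ℝ) / 10 ^ (k + 1) := by
  intro h
  refine hne (digitsValue.eq_of_eq (b := 10) (fun k => ⟨(hd k).1, by have := hd k; omega⟩)
    (fun k => by have := he k; omega) ?_)
  simpa only [digitsValue, Nat.cast_ofNat] using h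
end

section
/- Let S be a countable subset of the Euclidean plane ℝ² and let N and N₁ be two distinct points of ℝ² neither of which lies in S. Then the set of points c ∈ ℝ² that are equidistant from N and N₁ and are the centre of a circle through N and N₁ containing at least one point of S on its circumference — i.e., the set {c | dist(c, N) = dist(c, N₁) and there exists a ∈ S with dist(c, a) = dist(c, N)} — is countable. -/
/-!
A point equidistant from `N` and `N₁` is the centre of a circle through both; if that circle
also passes through `a ∉ {N, N₁}`, the centre is unique, since two circles with distinct centres
in the plane meet in at most two points. The centres in question are therefore a countable
union, over `a ∈ S`, of sets with at most one element.
-/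

open EuclideanGeometry Module

theorem subsingleton_setOf_dist_eq_dist_eq_of_finrank_eq_two
    {V P : Type*} [NormedAddCommGroup V] [InnerProductSpace ℝ V] [MetricSpace P]
    [NormedAddTorsor V P] [FiniteDimensional ℝ V] (hd : finrank ℝ V = 2)
    {N N₁ a : P} (hNN₁ : N ≠ N₁) (haN : a ≠ N) (haN₁ : a ≠ N₁) :
    {c : P | dist c N = dist c N₁ ∧ dist c a = dist c N}.Subsingleton := by
  rintro c ⟨hc₁, hc⟩ c' ⟨hc₁', hc'⟩
  by_contra hcc'
  simp only [dist_comm c, dist_comm c'] at hc₁ hc hc₁' hc'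
  rcases eq_of_dist_eq_of_dist_eq_of_finrank_eq_two hd hcc' hNN₁ rfl hc₁.symm hc rfl
    hc₁'.symm hc' with rfl | rfl
  exacts [haN rfl, haN₁ rfl]

/-- Counting lemma from Cantor's proof: the centres of circles through two fixed
points N, N₁ ∉ S whose circumference meets the countable set S form a countable
set. -/
theorem centres_meeting_countable_set_countable
    (S : Set (EuclideanSpace ℝ (Fin 2))) (hS : S.Countable)
    (N N₁ : EuclideanSpace ℝ (Fin 2)) (hNN₁ : N ≠ N₁) (hN : N ∉ S) (hN₁ : N₁ ∉ S) :
    Set.Countable {c : EuclideanSpace ℝ (Fin 2) |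
      dist c N = dist c N₁ ∧ ∃ a ∈ S, dist c a = dist c N} := by
  have hsub : {c : EuclideanSpace ℝ (Fin 2) |
      dist c N = dist c N₁ ∧ ∃ a ∈ S, dist c a = dist c N} ⊆
      ⋃ a ∈ S, {c | dist c N = dist c N₁ ∧ dist c a = dist c N} := by
    rintro c ⟨hc₁, a, ha, hc⟩
    exact Set.mem_biUnion ha ⟨hc₁, hc⟩
  refine (hS.biUnion fun a ha => Set.Subsingleton.countable ?_).mono hsub
  exact subsingleton_setOf_dist_eq_dist_eq_of_finrank_eq_two finrank_euclideanSpace_fin hNN₁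
    (ne_of_mem_of_not_mem ha hN) (ne_of_mem_of_not_mem ha hN₁)
end

section
/- Let S be a countable subset of the Euclidean plane ℝ² and let N and N₁ be two distinct points of ℝ² neither of which lies in S. Then there exists a point c ∈ ℝ² with dist(c, N) = dist(c, N₁) such that the circle with centre c and radius dist(c, N) contains no point of S; that is, for every a ∈ S, dist(c, a) ≠ dist(c, N). -/
/-!
The admissible centres form the perpendicular bisector of `N N₁`, a line, hence an uncountable
set. A centre whose circle through `N` and `N₁` also passes through a third point `a` is a
circumcentre of `N, N₁, a`; since two distinct circles in the plane meet in at most two points,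
each `a ∈ S` rules out at most one centre, so only countably many centres are excluded.
-/

open Module EuclideanGeometry AffineSubspace

theorem AffineSubspace.not_countable_of_nontrivial_direction {𝕜 V P : Type*}
    [NontriviallyNormedField 𝕜] [CompleteSpace 𝕜] [AddCommGroup V] [Module 𝕜 V] [AddTorsor V P]
    (s : AffineSubspace 𝕜 P) (hs : (s : Set P).Nonempty) [Nontrivial s.direction] :
    ¬ (s : Set P).Countable := by
  obtain ⟨p, hp⟩ := hs
  intro hcount
  have : Countable s := hcount.to_subtype
  have hinj : Function.Injective fun v : s.direction =>
      (⟨(v : V) +ᵥ p, vadd_mem_of_mem_direction v.2 hp⟩ : s) := by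
    intro v w h
    simpa using congrArg Subtype.val h
  have : Countable s.direction := hinj.countable
  exact (continuum_le_cardinal_of_module 𝕜 s.direction).not_gt
    (Cardinal.mk_le_aleph0.trans_lt Cardinal.aleph0_lt_continuum)

namespace EuclideanGeometry

variable {V P : Type*} [NormedAddCommGroup V] [InnerProductSpace ℝ V] [MetricSpace P]
  [NormedAddTorsor V P] [FiniteDimensional ℝ V]

theorem nontrivial_direction_perpBisector (hd : 2 ≤ finrank ℝ V) (p₁ p₂ : P) :
    Nontrivial (perpBisector p₁ p₂).direction := by
  rw [direction_perpBisector, ← finrank_pos_iff (R := ℝ)]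
  have hspan : finrank ℝ (ℝ ∙ (p₂ -ᵥ p₁)) ≤ 1 := by
    simpa using finrank_span_le_card ({p₂ -ᵥ p₁} : Set V)
  have := (ℝ ∙ (p₂ -ᵥ p₁)).finrank_add_finrank_orthogonal
  omega

theorem subsingleton_perpBisector_inter_perpBisector (hd : finrank ℝ V = 2) {p₁ p₂ p : P}
    (h₁₂ : p₁ ≠ p₂) (h₁ : p ≠ p₁) (h₂ : p ≠ p₂) :
    (perpBisector p₁ p₂ ∩ perpBisector p p₁ : Set P).Subsingleton := by
  rintro c ⟨hc₁₂, hc⟩ c' ⟨hc'₁₂, hc'⟩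
  by_contra hne
  rw [SetLike.mem_coe, mem_perpBisector_iff_dist_eq'] at hc₁₂ hc hc'₁₂ hc'
  rcases eq_of_dist_eq_of_dist_eq_of_finrank_eq_two hd hne h₁₂ rfl hc₁₂.symm hc rfl
    hc'₁₂.symm hc' with h | h
  exacts [h₁ h, h₂ h]

end EuclideanGeometry

/-- Existence step in Cantor's proof: there is a circle through N and N₁ whose
circumference avoids the countable set S entirely. -/
theorem exists_circle_avoiding_countable_set
    (S : Set (EuclideanSpace ℝ (Fin 2))) (hS : S.Countable)
    (N N₁ : EuclideanSpace ℝ (Fin 2)) (hNN₁ : N ≠ N₁) (hN : N ∉ S) (hN₁ : N₁ ∉ S) :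
    ∃ c : EuclideanSpace ℝ (Fin 2),
      dist c N = dist c N₁ ∧ ∀ a ∈ S, dist c a ≠ dist c N := by
  have hd : finrank ℝ (EuclideanSpace ℝ (Fin 2)) = 2 := finrank_euclideanSpace_fin
  have hexcluded : (⋃ a ∈ S,
      (perpBisector N N₁ ∩ perpBisector a N : Set (EuclideanSpace ℝ (Fin 2)))).Countable := by
    refine hS.biUnion fun a ha => ?_
    exact (subsingleton_perpBisector_inter_perpBisector hd hNN₁
      (ne_of_mem_of_not_mem ha hN) (ne_of_mem_of_not_mem ha hN₁)).countable
  have := nontrivial_direction_perpBisector hd.ge N N₁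
  obtain ⟨c, hc, hc_excluded⟩ := Set.not_subset.mp fun h =>
    (perpBisector N N₁).not_countable_of_nontrivial_direction perpBisector_nonempty
      (hexcluded.mono h)
  refine ⟨c, mem_perpBisector_iff_dist_eq.mp hc, fun a ha hca => hc_excluded ?_⟩
  exact Set.mem_biUnion ha ⟨hc, mem_perpBisector_iff_dist_eq.mpr hca⟩
end
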